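/- arXiv:2305.06064 — 3 statements merged into one kernel-verified Lean document; each statement's English description precedes it below -/
import Mathlib

section
/- For all real numbers x with 0 < x < 1 and all real y: there exist real numbers a and b such that x = exp(a)/(exp(a)+1), x = tanh(b), and y = a - 2·b + ln(x+1), if and only if y = ln(x). -/
/-!
The first condition says `x = sigmoid a`, i.e. `a = log (x / (1 - x))`, and the second says
`b = artanh x = log ((1 + x) / (1 - x)) / 2`. Substituting, the factors `1 - x` and `1 + x`
cancel in `a - 2 * b + log (x + 1)`, leaving `log x`.
-/

open Real Set

namespace Real

variable {x : ℝ}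

lemma exp_div_exp_add_one (a : ℝ) : exp a / (exp a + 1) = sigmoid a := by
  rw [sigmoid_def, exp_neg]
  field_simp

lemma sigmoid_log_div_one_sub (hx : x ∈ Ioo 0 1) : sigmoid (log (x / (1 - x))) = x := by
  have hx1 : 0 < 1 - x := by linarith [hx.2]
  rw [← exp_div_exp_add_one, exp_log (div_pos hx.1 hx1)]
  field_simp
  ring

lemma eq_sigmoid_iff (hx : x ∈ Ioo 0 1) {a : ℝ} : x = sigmoid a ↔ a = log (x / (1 - x)) := by
  conv_lhs => rw [← sigmoid_log_div_one_sub hx]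
  rw [sigmoid_inj, eq_comm]

lemma eq_tanh_iff (hx : x ∈ Ioo (-1) 1) {b : ℝ} : x = tanh b ↔ b = artanh x :=
  ⟨fun h ↦ h ▸ (artanh_tanh b).symm, fun h ↦ h ▸ (tanh_artanh hx).symm⟩

lemma log_div_one_sub_sub_two_mul_artanh_add_log (hx : x ∈ Ioo 0 1) :
    log (x / (1 - x)) - 2 * artanh x + log (x + 1) = log x := by
  obtain ⟨hx0, hx1⟩ := hx
  have h1m : 1 - x ≠ 0 := by linarith
  have h1p : 1 + x ≠ 0 := by linarith
  rw [artanh_eq_half_log ⟨by linarith, hx1.le⟩, log_div hx0.ne' h1m, log_div h1p h1m, add_comm x]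
  ring

end Real

theorem theta_gadget_correct (x y : ℝ) (hx0 : 0 < x) (hx1 : x < 1) :
    (∃ a b : ℝ, x = Real.exp a / (Real.exp a + 1) ∧ x = Real.tanh b ∧
      y = a - 2 * b + Real.log (x + 1)) ↔ y = Real.log x := by
  have hx : x ∈ Ioo 0 1 := ⟨hx0, hx1⟩
  simp only [exp_div_exp_add_one, eq_sigmoid_iff hx, eq_tanh_iff ⟨by linarith, hx1⟩,
    exists_and_left, exists_eq_left]
  rw [log_div_one_sub_sub_two_mul_artanh_add_log hx]
end

section
/- Define P(a, b, c) to mean (0 < a and 0 < b and 0 < c and ln(c) = ln(a) + ln(b)). Then for all real numbers a, b, c: c = a·b if and only if the conjunction of the following five conditions holds: (i) if 0 < a and 0 < b then P(a, b, c); (ii) if a < 0 and 0 < b then P(-a, b, -c); (iii) if 0 < a and b < 0 then P(a, -b, -c); (iv) if a < 0 and b < 0 then P(-a, -b, c); (v) (a = 0 or b = 0) if and only if c = 0. -/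
def PmulLog (a b c : ℝ) : Prop :=
  0 < a ∧ 0 < b ∧ 0 < c ∧ Real.log c = Real.log a + Real.log b

lemma PmulLog_of_eq {a b c : ℝ} (ha : 0 < a) (hb : 0 < b) (h : c = a * b) :
    PmulLog a b c := by
  refine ⟨ha, hb, h ▸ mul_pos ha hb, ?_⟩
  rw [h, Real.log_mul ha.ne' hb.ne']

lemma eq_of_PmulLog {a b c : ℝ} (h : PmulLog a b c) : c = a * b := by
  obtain ⟨ha, hb, hc, hl⟩ := h
  have := congrArg Real.exp hl
  rwa [Real.exp_add, Real.exp_log hc, Real.exp_log ha, Real.exp_log hb] at this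

theorem psi_mul_correct (a b c : ℝ) :
    c = a * b ↔
      ((0 < a ∧ 0 < b → PmulLog a b c) ∧
       (a < 0 ∧ 0 < b → PmulLog (-a) b (-c)) ∧
       (0 < a ∧ b < 0 → PmulLog a (-b) (-c)) ∧
       (a < 0 ∧ b < 0 → PmulLog (-a) (-b) c) ∧
       ((a = 0 ∨ b = 0) ↔ c = 0)) := by
  constructor
  · rintro rfl
    refine ⟨fun ⟨ha, hb⟩ => PmulLog_of_eq ha hb rfl,
      fun ⟨ha, hb⟩ => PmulLog_of_eq (by linarith) hb (by ring),
      fun ⟨ha, hb⟩ => PmulLog_of_eq ha (by linarith) (by ring),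
      fun ⟨ha, hb⟩ => PmulLog_of_eq (by linarith) (by linarith) (by ring), ?_⟩
    constructor
    · rintro (rfl | rfl) <;> ring
    · intro h
      rcases mul_eq_zero.mp h with h | h
      · exact Or.inl h
      · exact Or.inr h
  · rintro ⟨h1, h2, h3, h4, h5⟩
    rcases lt_trichotomy a 0 with ha | rfl | ha
    · rcases lt_trichotomy b 0 with hb | rfl | hb
      · exact eq_of_PmulLog (h4 ⟨ha, hb⟩) |>.trans (by ring)
      · rw [h5.mp (Or.inr rfl)]; ring
      · have := eq_of_PmulLog (h2 ⟨ha, hb⟩); linarith [this]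
    · rw [h5.mp (Or.inl rfl)]; ring
    · rcases lt_trichotomy b 0 with hb | rfl | hb
      · have := eq_of_PmulLog (h3 ⟨ha, hb⟩); linarith [this]
      · rw [h5.mp (Or.inr rfl)]; ring
      · exact eq_of_PmulLog (h1 ⟨ha, hb⟩)
end

section
/- Fix k : ℕ. Let C be the smallest family of subsets of ℝ^k (functions Fin k → ℝ) that contains every affine half-space of the form { y | b + ∑_{i} c i · y i ≥ 0 } for coefficients c : Fin k → ℝ and constant b : ℝ, and that is closed under complements and under binary intersections. Then for every S in C there exist a constant K ≥ 0 and a function g : (Fin k → ℝ) × ℝ → ℝ that is Lipschitz continuous with constant K (with respect to the product metric), such that for every y : Fin k → ℝ, y ∈ S if and only if there exists a real ε with 0 < ε, ε ≤ 1, and g(y, ε) ≥ 0. -/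
/-- The smallest family of subsets of `ℝ^k` containing every affine half-space
and closed under complements and binary intersections. -/
inductive LinSpec (k : ℕ) : Set (Fin k → ℝ) → Prop
  | halfspace (c : Fin k → ℝ) (b : ℝ) :
      LinSpec k {y | b + ∑ i, c i * y i ≥ 0}
  | compl {S : Set (Fin k → ℝ)} : LinSpec k S → LinSpec k Sᶜ
  | inter {S T : Set (Fin k → ℝ)} : LinSpec k S → LinSpec k T → LinSpec k (S ∩ T)

/-- Auxiliary predicate: `S` is representable by a Lipschitz function `g`
which is antitone in the `ε` coordinate. -/
def GoodSpec (k : ℕ) (S : Set (Fin k → ℝ)) : Prop :=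
  ∃ (K : NNReal) (g : (Fin k → ℝ) × ℝ → ℝ), LipschitzWith K g ∧
    (∀ y : Fin k → ℝ, ∀ ε₁ ε₂ : ℝ, ε₁ ≤ ε₂ → g (y, ε₂) ≤ g (y, ε₁)) ∧
    ∀ y : Fin k → ℝ, y ∈ S ↔ ∃ ε : ℝ, 0 < ε ∧ ε ≤ 1 ∧ g (y, ε) ≥ 0

lemma goodSpec_inter {k : ℕ} {S T : Set (Fin k → ℝ)}
    (hS : GoodSpec k S) (hT : GoodSpec k T) : GoodSpec k (S ∩ T) := by
  obtain ⟨K₁, g₁, hg₁, ha₁, hiff₁⟩ := hS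
  obtain ⟨K₂, g₂, hg₂, ha₂, hiff₂⟩ := hT
  refine ⟨max K₁ K₂, fun p => min (g₁ p) (g₂ p), hg₁.min hg₂, ?_, ?_⟩
  · intro y ε₁ ε₂ h
    exact min_le_min (ha₁ y ε₁ ε₂ h) (ha₂ y ε₁ ε₂ h)
  · intro y
    constructor
    · rintro ⟨hyS, hyT⟩
      obtain ⟨ε₁, hε₁0, hε₁1, h1⟩ := (hiff₁ y).mp hyS
      obtain ⟨ε₂, hε₂0, hε₂1, h2⟩ := (hiff₂ y).mp hyT
      refine ⟨min ε₁ ε₂, lt_min hε₁0 hε₂0, min_le_of_left_le hε₁1, ?_⟩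
      exact le_min (le_trans h1 (ha₁ y _ _ (min_le_left _ _)))
        (le_trans h2 (ha₂ y _ _ (min_le_right _ _)))
    · rintro ⟨ε, hε0, hε1, hε⟩
      have hε' : (0:ℝ) ≤ min (g₁ (y, ε)) (g₂ (y, ε)) := hε
      exact ⟨(hiff₁ y).mpr ⟨ε, hε0, hε1, le_trans hε' (min_le_left _ _)⟩,
        (hiff₂ y).mpr ⟨ε, hε0, hε1, le_trans hε' (min_le_right _ _)⟩⟩

lemma goodSpec_union {k : ℕ} {S T : Set (Fin k → ℝ)}
    (hS : GoodSpec k S) (hT : GoodSpec k T) : GoodSpec k (S ∪ T) := by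
  obtain ⟨K₁, g₁, hg₁, ha₁, hiff₁⟩ := hS
  obtain ⟨K₂, g₂, hg₂, ha₂, hiff₂⟩ := hT
  refine ⟨max K₁ K₂, fun p => max (g₁ p) (g₂ p), hg₁.max hg₂, ?_, ?_⟩
  · intro y ε₁ ε₂ h
    exact max_le_max (ha₁ y ε₁ ε₂ h) (ha₂ y ε₁ ε₂ h)
  · intro y
    constructor
    · rintro (hy | hy)
      · obtain ⟨ε, hε0, hε1, h⟩ := (hiff₁ y).mp hy
        exact ⟨ε, hε0, hε1, le_trans h (le_max_left _ _)⟩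
      · obtain ⟨ε, hε0, hε1, h⟩ := (hiff₂ y).mp hy
        exact ⟨ε, hε0, hε1, le_trans h (le_max_right _ _)⟩
    · rintro ⟨ε, hε0, hε1, hε⟩
      rcases le_max_iff.mp hε with h | h
      · exact Or.inl ((hiff₁ y).mpr ⟨ε, hε0, hε1, h⟩)
      · exact Or.inr ((hiff₂ y).mpr ⟨ε, hε0, hε1, h⟩)

lemma goodSpec_of_linSpec {k : ℕ} {S : Set (Fin k → ℝ)} (hS : LinSpec k S) :
    GoodSpec k S ∧ GoodSpec k Sᶜ := by
  induction hS with
  | halfspace c b =>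
      set L : (Fin k → ℝ) →L[ℝ] ℝ := ∑ i, c i • ContinuousLinearMap.proj i with hL
      have hLy : ∀ y : Fin k → ℝ, L y = ∑ i, c i * y i := by
        intro y
        simp [hL, ContinuousLinearMap.sum_apply, smul_eq_mul]
      have hlipfst : LipschitzWith (‖L‖₊ * 1) (fun p : (Fin k → ℝ) × ℝ => L p.1) :=
        L.lipschitz.comp LipschitzWith.prod_fst
      constructor
      · refine ⟨‖L‖₊, fun p => b + L p.1,
          (LipschitzWith.const b).add hlipfst |>.weaken (by simp), ?_, ?_⟩
        · intro y ε₁ ε₂ _; exact le_refl _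
        · intro y
          constructor
          · intro hy
            exact ⟨1, one_pos, le_refl 1, by simpa [hLy] using hy⟩
          · rintro ⟨ε, _, _, hε⟩
            simpa [hLy] using hε
      · refine ⟨‖L‖₊ + 1, fun p => -(b + L p.1) - p.2,
          (((LipschitzWith.const b).add hlipfst |>.weaken (by simp)).neg).sub
            LipschitzWith.prod_snd, ?_, ?_⟩
        · intro y ε₁ ε₂ h
          exact sub_le_sub_left h _
        · intro y
          have hyc : y ∈ {y : Fin k → ℝ | b + ∑ i, c i * y i ≥ 0}ᶜ ↔
              b + ∑ i, c i * y i < 0 := by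
            simp [Set.mem_compl_iff, not_le]
          rw [hyc]
          constructor
          · intro hy
            refine ⟨min (-(b + ∑ i, c i * y i)) 1, lt_min (by linarith) one_pos,
              min_le_right _ _, ?_⟩
            have : min (-(b + ∑ i, c i * y i)) 1 ≤ -(b + ∑ i, c i * y i) :=
              min_le_left _ _
            simp only [hLy]
            linarith
          · rintro ⟨ε, hε0, _, hε⟩
            simp only [hLy] at hε
            linarith
  | compl h ih =>
      exact ⟨ih.2, by rw [compl_compl]; exact ih.1⟩
  | inter hS hT ihS ihT =>
      refine ⟨goodSpec_inter ihS.1 ihT.1, ?_⟩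
      rw [Set.compl_inter]
      exact goodSpec_union ihS.2 ihT.2

theorem linear_spec_as_reachability (k : ℕ) (S : Set (Fin k → ℝ)) (hS : LinSpec k S) :
    ∃ (K : NNReal) (g : (Fin k → ℝ) × ℝ → ℝ), LipschitzWith K g ∧
      ∀ y : Fin k → ℝ, y ∈ S ↔ ∃ ε : ℝ, 0 < ε ∧ ε ≤ 1 ∧ g (y, ε) ≥ 0 := by
  obtain ⟨K, g, hlip, _, hiff⟩ := (goodSpec_of_linSpec hS).1
  exact ⟨K, g, hlip, hiff⟩
end
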